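/- For all n ≥ 1, the number of permutations of [n] avoiding both generalized patterns 1-23 and 2-13 equals 2^{n-1}. -/

import Mathlib

/-!
A permutation avoids `1-23` and `2-13` exactly when the top `a (j+1)` of every ascent
`a j < a (j+1)` lies below every entry before `a j`. The largest entry of such a permutation tops
the ascent ending at it, so nothing may precede that ascent: it stands at position `0` or `1`.
Deleting it from either position is a bijection onto the avoiders one size smaller, so their
number doubles with each step.
-/

def contains123 {n : ℕ} (π : Equiv.Perm (Fin n)) : Prop :=
  ∃ i j : ℕ, ∃ (_ : i < j) (hj : j + 1 < n),
    π ⟨i, by omega⟩ < π ⟨j, by omega⟩ ∧ π ⟨j, by omega⟩ < π ⟨j + 1, hj⟩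

def contains213 {n : ℕ} (π : Equiv.Perm (Fin n)) : Prop :=
  ∃ i j : ℕ, ∃ (_ : i < j) (hj : j + 1 < n),
    π ⟨j, by omega⟩ < π ⟨i, by omega⟩ ∧ π ⟨i, by omega⟩ < π ⟨j + 1, hj⟩

open Equiv

def AscentTopsBelowEarlier {α : Type*} [LT α] {n : ℕ} (f : Fin n → α) : Prop :=
  ∀ i j l : Fin n, i < j → (l : ℕ) = j + 1 → f j < f l → f l < f i

section AscentTopsBelowEarlier

variable {α : Type*} {n : ℕ}

theorem ascentTopsBelowEarlier_comp_iff [LinearOrder α] {β : Type*} [Preorder β] {φ : α → β}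
    (hφ : StrictMono φ) {f : Fin n → α} :
    AscentTopsBelowEarlier (φ ∘ f) ↔ AscentTopsBelowEarlier f := by
  simp only [AscentTopsBelowEarlier, Function.comp_apply, hφ.lt_iff_lt]

variable [Preorder α]

theorem AscentTopsBelowEarlier.val_le_one_of_forall_lt {f : Fin n → α}
    (hf : AscentTopsBelowEarlier f) {k : Fin n} (hk : ∀ x, x ≠ k → f x < f k) :
    (k : ℕ) ≤ 1 := by
  by_contra! h
  have h0 : (⟨0, by omega⟩ : Fin n) ≠ k := by simp [Fin.ext_iff]; omega
  have hpred : (⟨k - 1, by omega⟩ : Fin n) ≠ k := by simp [Fin.ext_iff]; omega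
  exact (hk _ h0).asymm <| hf _ _ k (by simp [Fin.lt_def]; omega) (by simp; omega) (hk _ hpred)

theorem ascentTopsBelowEarlier_iff_comp_succAbove {f : Fin (n + 1) → α} {k : Fin (n + 1)}
    (hk : (k : ℕ) ≤ 1) (hmax : ∀ x, x ≠ k → f x < f k) :
    AscentTopsBelowEarlier f ↔ AscentTopsBelowEarlier (f ∘ k.succAbove) := by
  have hval : ∀ i : Fin n, 0 < (i : ℕ) → (k.succAbove i : ℕ) = i + 1 := fun i hi => by
    rw [Fin.succAbove_of_le_castSucc _ _ (Fin.le_def.2 (by simp; omega)), Fin.val_succ]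
  constructor
  · intro hf i j l hij hl hjl
    have hj : 0 < (j : ℕ) := lt_of_le_of_lt (Nat.zero_le _) hij
    exact hf _ _ _ (Fin.strictMono_succAbove k hij) (by rw [hval j hj, hval l (by omega)]; omega)
      hjl
  · intro hg i j l hij hl hjl
    have hjk : j ≠ k := fun h => (hmax l (by rintro rfl; simp [h] at hl)).asymm (h ▸ hjl)
    have hlk : l ≠ k := by rintro rfl; have : (i : ℕ) < j := hij; omega
    obtain ⟨j, rfl⟩ := Fin.exists_succAbove_eq hjk
    obtain ⟨l, rfl⟩ := Fin.exists_succAbove_eq hlk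
    by_cases hik : i = k
    · exact hik ▸ hmax _ hlk
    obtain ⟨i, rfl⟩ := Fin.exists_succAbove_eq hik
    have hij' : i < j := Fin.succAbove_lt_succAbove_iff.1 hij
    have hjl' : j < l := Fin.succAbove_lt_succAbove_iff.1 <|
      show k.succAbove j < k.succAbove l by rw [Fin.lt_def]; omega
    have hj : 0 < (j : ℕ) := lt_of_le_of_lt (Nat.zero_le _) hij'
    exact hg i j l hij' (by rw [hval j hj, hval l (by omega)] at hl; omega) hjl

end AscentTopsBelowEarlier

theorem not_contains123_and_not_contains213_iff {n : ℕ} (π : Perm (Fin n)) :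
    ¬contains123 π ∧ ¬contains213 π ↔ AscentTopsBelowEarlier π := by
  constructor
  · rintro ⟨h123, h213⟩ i j l hij hl hjl
    obtain ⟨l, hln⟩ := l
    obtain rfl : l = j + 1 := hl
    by_contra! hil
    rcases lt_trichotomy (π i) (π j) with hij' | hij' | hij'
    · exact h123 ⟨i, j, hij, _, hij', hjl⟩
    · exact hij.ne (π.injective hij')
    · have hil' := hil.lt_of_ne (π.injective.ne (by simp [Fin.ext_iff]; omega))
      exact h213 ⟨i, j, hij, _, hij', hil'⟩
  · intro h
    constructor
    · rintro ⟨i, j, hij, hj, h1, h2⟩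
      exact (h1.trans h2).asymm (h ⟨i, _⟩ ⟨j, _⟩ ⟨j + 1, hj⟩ hij rfl h2)
    · rintro ⟨i, j, hij, hj, h1, h2⟩
      exact h2.asymm (h ⟨i, _⟩ ⟨j, _⟩ ⟨j + 1, hj⟩ hij rfl (h1.trans h2))

theorem optionCongr_removeNone_of_apply_none {α : Type*} {e : Perm (Option α)}
    (h : e none = none) : (removeNone e).optionCongr = e := by
  ext1 x
  cases x with
  | none => simp [h]
  | some a =>
    rw [optionCongr_apply, Option.map_some, removeNone_some]
    exact Option.ne_none_iff_exists'.mp fun ha =>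
      Option.some_ne_none a (e.injective (ha.trans h.symm))

section InsertMax

variable {n : ℕ}

def insertMax (k : Fin (n + 1)) (σ : Perm (Fin n)) : Perm (Fin (n + 1)) :=
  (finSuccEquiv' k).trans (σ.optionCongr.trans (finSuccEquiv' (Fin.last n)).symm)

theorem insertMax_apply_self (k : Fin (n + 1)) (σ : Perm (Fin n)) :
    insertMax k σ k = Fin.last n := by
  simp only [insertMax, trans_apply, finSuccEquiv'_at, optionCongr_apply, Option.map_none,
    finSuccEquiv'_symm_none]

theorem insertMax_apply_succAbove (k : Fin (n + 1)) (σ : Perm (Fin n)) (i : Fin n) :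
    insertMax k σ (k.succAbove i) = (σ i).castSucc := by
  simp only [insertMax, trans_apply, finSuccEquiv'_succAbove, optionCongr_apply, Option.map_some,
    finSuccEquiv'_symm_some, Fin.succAbove_last]

def insertMaxEquiv (k : Fin (n + 1)) :
    Perm (Fin n) ≃ {π : Perm (Fin (n + 1)) // π k = Fin.last n} where
  toFun σ := ⟨insertMax k σ, insertMax_apply_self k σ⟩
  invFun π := removeNone ((finSuccEquiv' k).symm.trans (π.1.trans (finSuccEquiv' (Fin.last n))))
  left_inv σ := by
    dsimp only
    rw [insertMax, trans_assoc, trans_assoc, symm_trans_self, trans_refl, ← trans_assoc,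
      symm_trans_self, refl_trans, removeNone_optionCongr]
  right_inv π := by
    ext1
    dsimp only
    rw [insertMax, optionCongr_removeNone_of_apply_none (by simp [π.2])]
    ext1 x
    simp

theorem apply_lt_apply_of_apply_eq_last {π : Perm (Fin (n + 1))} {k : Fin (n + 1)}
    (hk : π k = Fin.last n) (x : Fin (n + 1)) (hx : x ≠ k) : π x < π k := by
  rw [hk, Fin.lt_last_iff_ne_last, ← hk]
  exact π.injective.ne hx

theorem card_apply_eq_last_and_ascentTopsBelowEarlier {k : Fin (n + 1)} (hk : (k : ℕ) ≤ 1) :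
    Nat.card {π : Perm (Fin (n + 1)) // π k = Fin.last n ∧ AscentTopsBelowEarlier π} =
      Nat.card {σ : Perm (Fin n) // AscentTopsBelowEarlier σ} := by
  have hiff : ∀ σ : Perm (Fin n),
      AscentTopsBelowEarlier σ ↔ AscentTopsBelowEarlier (insertMaxEquiv k σ).1 := fun σ => by
    have hcomp : insertMax k σ ∘ k.succAbove = Fin.castSucc ∘ σ :=
      funext (insertMax_apply_succAbove k σ)
    rw [← ascentTopsBelowEarlier_comp_iff Fin.strictMono_castSucc, ← hcomp]
    exact (ascentTopsBelowEarlier_iff_comp_succAbove hk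
      (apply_lt_apply_of_apply_eq_last (insertMax_apply_self k σ))).symm
  exact Nat.card_congr ((subtypeSubtypeEquivSubtypeInter _ _).symm.trans
    ((insertMaxEquiv k).subtypeEquiv hiff).symm)

end InsertMax

theorem card_ascentTopsBelowEarlier_succ_succ (n : ℕ) :
    Nat.card {π : Perm (Fin (n + 2)) // AscentTopsBelowEarlier π} =
      2 * Nat.card {σ : Perm (Fin (n + 1)) // AscentTopsBelowEarlier σ} := by
  classical
  have hsplit : ∀ π : Perm (Fin (n + 2)), AscentTopsBelowEarlier π ↔
      (π 0 = Fin.last _ ∧ AscentTopsBelowEarlier π) ∨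
        (π 1 = Fin.last _ ∧ AscentTopsBelowEarlier π) := by
    refine fun π => ⟨fun hπ => ?_, by tauto⟩
    obtain ⟨k, hk⟩ := π.surjective (Fin.last _)
    have hk01 : k = 0 ∨ k = 1 := by
      have := hπ.val_le_one_of_forall_lt (apply_lt_apply_of_apply_eq_last hk)
      simp only [Fin.ext_iff, Fin.val_zero, Fin.val_one]
      omega
    rcases hk01 with rfl | rfl
    exacts [.inl ⟨hk, hπ⟩, .inr ⟨hk, hπ⟩]
  have hdisj :
      Disjoint (fun π : Perm (Fin (n + 2)) => π 0 = Fin.last _ ∧ AscentTopsBelowEarlier π)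
        (fun π => π 1 = Fin.last _ ∧ AscentTopsBelowEarlier π) := by
    simp only [Pi.disjoint_iff, Prop.disjoint_iff]
    rintro π ⟨⟨h0, -⟩, h1, -⟩
    exact zero_ne_one (π.injective (h0.trans h1.symm))
  rw [Nat.card_congr ((subtypeEquivRight hsplit).trans (subtypeOrEquiv _ _ hdisj)), Nat.card_sum,
    card_apply_eq_last_and_ascentTopsBelowEarlier (k := 0) (by simp),
    card_apply_eq_last_and_ascentTopsBelowEarlier (k := 1) (by simp), two_mul]

theorem card_ascentTopsBelowEarlier_of_le_one {n : ℕ} (hn : n ≤ 1) :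
    Nat.card {π : Perm (Fin n) // AscentTopsBelowEarlier π} = 1 := by
  have hall : ∀ π : Perm (Fin n), AscentTopsBelowEarlier π := fun π i j _ hij => by
    have : (i : ℕ) < j := hij
    omega
  rw [Nat.card_congr (subtypeUnivEquiv hall), Nat.card_perm, Nat.card_fin,
    Nat.factorial_eq_one.2 hn]

theorem card_ascentTopsBelowEarlier_succ (n : ℕ) :
    Nat.card {π : Perm (Fin (n + 1)) // AscentTopsBelowEarlier π} = 2 ^ n := by
  induction n with
  | zero => exact card_ascentTopsBelowEarlier_of_le_one le_rfl
  | succ n ih => rw [card_ascentTopsBelowEarlier_succ_succ, ih, pow_succ']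

theorem stmt7 (n : ℕ) :
    Nat.card {π : Equiv.Perm (Fin n) // ¬ contains123 π ∧ ¬ contains213 π} = 2 ^ (n - 1) := by
  rw [Nat.card_congr (subtypeEquivRight not_contains123_and_not_contains213_iff)]
  cases n with
  | zero => exact card_ascentTopsBelowEarlier_of_le_one zero_le_one
  | succ n => exact card_ascentTopsBelowEarlier_succ n
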